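/- Let A be an algebra with mean value on ℝ^N, with mean value functional M. Then there exists a Borel (regular) probability measure β on the spectrum Δ(A) — the M-measure of A — such that M(u) = ∫_{Δ(A)} G(u) dβ for every u ∈ A. -/

import Mathlib

open MeasureTheory Filter Topology BoundedContinuousFunction

noncomputable section

/-- A bounded (continuous) function `u : ℝ^N → ℂ` possesses the mean value `m` if for
every integrable `φ`, `∫ u(x/ε) φ(x) dx → m ∫ φ(x) dx` as `ε → 0⁺`. -/
def HasMeanValueC {N : ℕ} (u : (Fin N → ℝ) → ℂ) (m : ℂ) : Prop :=
  ∀ φ : (Fin N → ℝ) → ℂ, Integrable φ →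
    Tendsto (fun ε : ℝ => ∫ x, u (ε⁻¹ • x) * φ x) (𝓝[>] (0 : ℝ))
      (𝓝 (m * ∫ x, φ x))

/-- An algebra with mean value on `ℝ^N`: a closed, conjugation-stable, translation-invariant
subalgebra of the bounded continuous functions `ℝ^N → ℂ` consisting of uniformly continuous
functions, each of which possesses a mean value. -/
structure MVAlgebra (N : ℕ) where
  carrier : Subalgebra ℂ ((Fin N → ℝ) →ᵇ ℂ)
  uniformCont : ∀ u ∈ carrier, UniformContinuous (⇑u)
  isClosed : IsClosed (carrier : Set ((Fin N → ℝ) →ᵇ ℂ))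
  star_mem : ∀ u ∈ carrier, star u ∈ carrier
  translate_mem : ∀ u ∈ carrier, ∀ a : Fin N → ℝ,
    u.compContinuous ⟨fun x => x + a, continuous_id.add continuous_const⟩ ∈ carrier
  exists_mean : ∀ u ∈ carrier, ∃ m : ℂ, HasMeanValueC (⇑u) m

/-- The spectrum `Δ(A)` of an algebra with mean value: the character space of `A`
with the weak-* topology. -/
abbrev MVSpectrum {N : ℕ} (A : MVAlgebra N) := WeakDual.characterSpace ℂ A.carrier

/-! The mean value `M` is linear with `M 1 = 1`, since mean values are unique. It is also
positive: if the Gelfand transform of `u` is nonnegative on `Δ(A)`, then so is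
`u y = G(u)(φ_y)` for every evaluation character `φ_y`, hence so are the averages whose limit
is `M u`. Transported along the Gelfand isomorphism `A ≃ C(Δ(A), ℂ)`, `M` is therefore a state
on the continuous functions on the compact space `Δ(A)`, and the Riesz–Markov–Kakutani theorem
represents it by a regular Borel probability measure. -/

open scoped ComplexOrder CompactlySupported

namespace ContinuousMap

variable {X : Type*} [TopologicalSpace X]

def ofReal (f : C(X, ℝ)) : C(X, ℂ) := ⟨fun x => f x, by fun_prop⟩

def re (F : C(X, ℂ)) : C(X, ℝ) := ⟨fun x => (F x).re, by fun_prop⟩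

def im (F : C(X, ℂ)) : C(X, ℝ) := ⟨fun x => (F x).im, by fun_prop⟩

@[simp] lemma ofReal_apply (f : C(X, ℝ)) (x : X) : f.ofReal x = f x := rfl

@[simp] lemma re_apply (F : C(X, ℂ)) (x : X) : F.re x = (F x).re := rfl

@[simp] lemma im_apply (F : C(X, ℂ)) (x : X) : F.im x = (F x).im := rfl

lemma ofReal_re_add_I_smul_ofReal_im (F : C(X, ℂ)) :
    F.re.ofReal + Complex.I • F.im.ofReal = F := by
  ext x
  simp only [ContinuousMap.add_apply, ContinuousMap.smul_apply, ofReal_apply, re_apply, im_apply,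
    smul_eq_mul]
  rw [mul_comm]
  exact Complex.re_add_im _

end ContinuousMap

namespace PositiveLinearMap

open ContinuousMap

variable {X : Type*} [TopologicalSpace X]

-- In `ComplexOrder`, `0 ≤ z` means that `z` is a nonnegative real; apply this to `f + ‖f‖ ≥ 0`.
lemma im_apply_ofReal [CompactSpace X] (φ : C(X, ℂ) →ₚ[ℂ] ℂ) (f : C(X, ℝ)) :
    (φ f.ofReal).im = 0 := by
  have hshift : 0 ≤ f.ofReal + (‖f‖ : ℂ) • 1 := ContinuousMap.le_def.2 fun x => by
    simp only [ContinuousMap.add_apply, ofReal_apply, ContinuousMap.smul_apply,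
      ContinuousMap.one_apply, smul_eq_mul, mul_one, ContinuousMap.zero_apply]
    exact_mod_cast neg_le_iff_add_nonneg.mp (neg_le_of_abs_le (f.norm_coe_le_norm x))
  have hφ1 : (φ 1).im = 0 := (Complex.nonneg_iff.mp (φ.map_nonneg zero_le_one)).2.symm
  have h := (Complex.nonneg_iff.mp (φ.map_nonneg hshift)).2
  rw [map_add, map_smul, smul_eq_mul, Complex.add_im, Complex.mul_im, hφ1] at h
  simpa using h.symm

def realRestriction (φ : C(X, ℂ) →ₚ[ℂ] ℂ) : C_c(X, ℝ) →ₚ[ℝ] ℝ where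
  toFun f := (φ (f : C(X, ℝ)).ofReal).re
  map_add' f g := by
    rw [← Complex.add_re, ← map_add]
    congr 2
    ext x
    simp
  map_smul' c f := by
    rw [RingHom.id_apply, smul_eq_mul, ← Complex.re_ofReal_mul, ← smul_eq_mul, ← map_smul]
    congr 2
    ext x
    simp
  monotone' f g hfg := by
    have : (f : C(X, ℝ)).ofReal ≤ (g : C(X, ℝ)).ofReal :=
      ContinuousMap.le_def.2 fun x => by simpa using hfg x
    exact (Complex.le_def.mp (φ.monotone' this)).1

theorem exists_isProbabilityMeasure_regular_integral_eq [CompactSpace X] [T2Space X]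
    [MeasurableSpace X] [BorelSpace X] (φ : C(X, ℂ) →ₚ[ℂ] ℂ) (hφ : φ 1 = 1) :
    ∃ β : Measure X, IsProbabilityMeasure β ∧ β.Regular ∧
      ∀ F : C(X, ℂ), φ F = ∫ x, F x ∂β := by
  set β := RealRMK.rieszMeasure (realRestriction φ)
  have hint (f : C(X, ℝ)) : ∫ x, f x ∂β = (φ f.ofReal).re :=
    RealRMK.integral_rieszMeasure _ (CompactlySupportedContinuousMap.continuousMapEquiv f)
  have hreal (f : C(X, ℝ)) : φ f.ofReal = ∫ x, f x ∂β := by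
    rw [hint]
    exact Complex.ext rfl (im_apply_ofReal φ f)
  refine ⟨β, ⟨?_⟩, inferInstance, fun F => ?_⟩
  · have h1 : (1 : C(X, ℝ)).ofReal = 1 := by ext; simp
    have := hint 1
    rw [h1, hφ] at this
    simpa [measureReal_def, ENNReal.toReal_eq_one_iff] using this
  · have hFint : Integrable F β :=
      F.continuous.integrable_of_hasCompactSupport (HasCompactSupport.of_compactSpace _)
    rw [← integral_re_add_im hFint]
    conv_lhs => rw [← F.ofReal_re_add_I_smul_ofReal_im]
    rw [map_add, map_smul, hreal, hreal, smul_eq_mul, mul_comm]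
    rfl

end PositiveLinearMap

section MeanValue

variable {N : ℕ}

lemma integrable_comp_smul_mul (u : (Fin N → ℝ) →ᵇ ℂ) {φ : (Fin N → ℝ) → ℂ}
    (hφ : Integrable φ) (ε : ℝ) : Integrable (fun x => u (ε⁻¹ • x) * φ x) :=
  hφ.bdd_mul (u.continuous.comp (continuous_const_smul ε⁻¹)).aestronglyMeasurable
    (.of_forall fun _ => u.norm_coe_le_norm _)

lemma integrable_indicator_one_ball :
    Integrable ((Metric.ball (0 : Fin N → ℝ) 1).indicator (1 : (Fin N → ℝ) → ℂ)) :=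
  (integrable_indicator_iff measurableSet_ball).2 (integrableOn_const measure_ball_lt_top.ne)

lemma integral_indicator_one_ball :
    ∫ x, (Metric.ball (0 : Fin N → ℝ) 1).indicator (1 : (Fin N → ℝ) → ℂ) x =
      (volume.real (Metric.ball (0 : Fin N → ℝ) 1) : ℂ) := by
  rw [integral_indicator measurableSet_ball]
  simp

lemma measureReal_ball_pos : 0 < volume.real (Metric.ball (0 : Fin N → ℝ) 1) :=
  ENNReal.toReal_pos (Metric.measure_ball_pos volume 0 one_pos).ne' measure_ball_lt_top.ne

namespace HasMeanValueC

lemma tendsto_integral_mul_indicator_ball {u : (Fin N → ℝ) → ℂ} {m : ℂ}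
    (h : HasMeanValueC u m) :
    Tendsto (fun ε : ℝ => ∫ x, u (ε⁻¹ • x) * (Metric.ball (0 : Fin N → ℝ) 1).indicator 1 x)
      (𝓝[>] 0) (𝓝 (m * volume.real (Metric.ball (0 : Fin N → ℝ) 1))) := by
  simpa [integral_indicator_one_ball] using h _ integrable_indicator_one_ball

lemma unique {u : (Fin N → ℝ) → ℂ} {m₁ m₂ : ℂ} (h₁ : HasMeanValueC u m₁)
    (h₂ : HasMeanValueC u m₂) : m₁ = m₂ :=
  mul_right_cancel₀ (Complex.ofReal_ne_zero.2 measureReal_ball_pos.ne')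
    (tendsto_nhds_unique h₁.tendsto_integral_mul_indicator_ball
      h₂.tendsto_integral_mul_indicator_ball)

lemma const (c : ℂ) : HasMeanValueC (fun _ : Fin N → ℝ => c) c := fun φ _ =>
  tendsto_const_nhds.congr fun _ => (integral_const_mul c φ).symm

lemma const_mul {u : (Fin N → ℝ) → ℂ} {m : ℂ} (h : HasMeanValueC u m) (c : ℂ) :
    HasMeanValueC (fun x => c * u x) (c * m) := fun φ hφ => by
  simpa only [mul_assoc, integral_const_mul] using (h φ hφ).const_mul c

lemma add {u v : (Fin N → ℝ) →ᵇ ℂ} {m n : ℂ} (hu : HasMeanValueC (⇑u) m)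
    (hv : HasMeanValueC (⇑v) n) : HasMeanValueC ⇑(u + v) (m + n) := fun φ hφ => by
  have hsplit (ε : ℝ) : ∫ x, (u + v) (ε⁻¹ • x) * φ x =
      (∫ x, u (ε⁻¹ • x) * φ x) + ∫ x, v (ε⁻¹ • x) * φ x := by
    simp only [BoundedContinuousFunction.coe_add, Pi.add_apply, add_mul]
    exact integral_add (integrable_comp_smul_mul u hφ ε) (integrable_comp_smul_mul v hφ ε)
  simpa only [hsplit, add_mul] using (hu φ hφ).add (hv φ hφ)

lemma nonneg {u : (Fin N → ℝ) → ℂ} {m : ℂ} (h : HasMeanValueC u m) (hu : ∀ x, 0 ≤ u x) :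
    0 ≤ m := by
  set r := volume.real (Metric.ball (0 : Fin N → ℝ) 1)
  have hr : 0 < r := measureReal_ball_pos
  have hlim : 0 ≤ m * r :=
    ge_of_tendsto' h.tendsto_integral_mul_indicator_ball fun ε => integral_nonneg fun x => by
      by_cases hx : x ∈ Metric.ball (0 : Fin N → ℝ) 1 <;> simp [hx, hu]
  have hm : m = m * r * (r⁻¹ : ℝ) := by
    rw [mul_assoc, ← Complex.ofReal_mul, mul_inv_cancel₀ hr.ne', Complex.ofReal_one, mul_one]
  rw [hm]
  exact mul_nonneg hlim (by exact_mod_cast (inv_pos.2 hr).le)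

end HasMeanValueC

end MeanValue

namespace MVAlgebra

variable {N : ℕ} (A : MVAlgebra N)

def toStarSubalgebra : StarSubalgebra ℂ ((Fin N → ℝ) →ᵇ ℂ) :=
  { A.carrier with star_mem' := A.star_mem _ }

instance : IsClosed (A.toStarSubalgebra : Set ((Fin N → ℝ) →ᵇ ℂ)) := A.isClosed

instance : CompleteSpace A.carrier := A.isClosed.completeSpace_coe

def gelfandEquiv : A.carrier ≃ₐ[ℂ] C(MVSpectrum A, ℂ) :=
  AlgEquiv.ofBijective (WeakDual.gelfandTransform ℂ A.carrier)
    (gelfandTransform_bijective A.toStarSubalgebra)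

@[simp] lemma gelfandEquiv_apply_apply (u : A.carrier) (s : MVSpectrum A) :
    A.gelfandEquiv u s = s u := rfl

def evalCharacter (y : Fin N → ℝ) : MVSpectrum A :=
  WeakDual.CharacterSpace.equivAlgHom.symm
    { toFun u := (u : (Fin N → ℝ) →ᵇ ℂ) y
      map_one' := rfl
      map_mul' _ _ := rfl
      map_zero' := rfl
      map_add' _ _ := rfl
      commutes' _ := rfl }

lemma gelfandEquiv_symm_apply_apply (F : C(MVSpectrum A, ℂ)) (y : Fin N → ℝ) :
    (A.gelfandEquiv.symm F : (Fin N → ℝ) →ᵇ ℂ) y = F (A.evalCharacter y) := by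
  conv_rhs => rw [← A.gelfandEquiv.apply_symm_apply F]
  rfl

variable {A} {M : A.carrier → ℂ}
  (hM : ∀ u : A.carrier, HasMeanValueC (⇑(u : (Fin N → ℝ) →ᵇ ℂ)) (M u))

def meanLinearMap : A.carrier →ₗ[ℂ] ℂ where
  toFun := M
  map_add' u v := ((hM u).add (hM v)).unique (hM (u + v)) |>.symm
  map_smul' c u := ((hM u).const_mul c).unique (hM (c • u)) |>.symm

def meanState : C(MVSpectrum A, ℂ) →ₚ[ℂ] ℂ :=
  .mk₀ ((meanLinearMap hM).comp A.gelfandEquiv.symm.toLinearMap) fun F hF =>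
    (hM _).nonneg fun y => by
      rw [AlgEquiv.toLinearMap_apply, gelfandEquiv_symm_apply_apply]
      exact hF _

lemma meanState_apply (F : C(MVSpectrum A, ℂ)) :
    meanState hM F = M (A.gelfandEquiv.symm F) := rfl

lemma meanState_apply_gelfandEquiv (u : A.carrier) :
    meanState hM (A.gelfandEquiv u) = M u := by
  rw [meanState_apply, AlgEquiv.symm_apply_apply]

lemma meanState_one : meanState hM 1 = 1 := by
  rw [meanState_apply, map_one]
  exact (hM 1).unique (HasMeanValueC.const 1)

end MVAlgebra

/-- For an algebra with mean value `A` on `ℝ^N` with mean value functional `M`, there exists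
a regular Borel probability measure `β` on the spectrum `Δ(A)` — the M-measure of `A` —
such that `M(u) = ∫_{Δ(A)} G(u) dβ` for every `u ∈ A`, where `G(u)(s) = s(u)` is the
Gelfand transform. -/
theorem stmt5 {N : ℕ} (A : MVAlgebra N)
    [MeasurableSpace (MVSpectrum A)] [BorelSpace (MVSpectrum A)]
    (M : A.carrier → ℂ)
    (hM : ∀ u : A.carrier, HasMeanValueC (⇑(u : (Fin N → ℝ) →ᵇ ℂ)) (M u)) :
    ∃ β : Measure (MVSpectrum A), IsProbabilityMeasure β ∧ β.Regular ∧
      ∀ u : A.carrier, M u = ∫ s : MVSpectrum A, s u ∂β := by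
  obtain ⟨β, hprob, hreg, hβ⟩ :=
    (A.meanState hM).exists_isProbabilityMeasure_regular_integral_eq (A.meanState_one hM)
  refine ⟨β, hprob, hreg, fun u => ?_⟩
  rw [← A.meanState_apply_gelfandEquiv hM u, hβ]
  simp only [MVAlgebra.gelfandEquiv_apply_apply]
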